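/- Let m = 2k+1 be odd with m not divisible by 3, and define d = (7k+8)/4 if k ≡ 0 (mod 4), d = (5k+7)/4 if k ≡ 1 (mod 4), d = (3k+6)/4 if k ≡ 2 (mod 4), and d = (k+5)/4 if k ≡ 3 (mod 4). Then gcd(d, m) = 1. -/

import Mathlib

theorem Nat.Coprime.of_mul_eq_mul_add {a b c d m : ℕ} (h : a * d = c * m + b)
    (hb : Nat.Coprime b m) : Nat.Coprime d m := by
  have hm : Nat.gcd d m ∣ m := Nat.gcd_dvd_right d m
  have hb' : Nat.gcd d m ∣ b := by
    have had : Nat.gcd d m ∣ c * m + b := h ▸ (Nat.gcd_dvd_left d m).mul_left a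
    exact (Nat.dvd_add_right (hm.mul_left c)).mp had
  exact Nat.eq_one_of_dvd_coprimes hb hb' hm

theorem Nat.coprime_nine_of_not_three_dvd {m : ℕ} (h3 : ¬ 3 ∣ m) : Nat.Coprime 9 m :=
  ((Nat.Prime.coprime_iff_not_dvd Nat.prime_three).mpr h3).pow_left 2

theorem gcd_d_m_eq_one (k d : ℕ) (h3 : ¬ 3 ∣ (2 * k + 1))
    (hd : (k % 4 = 0 ∧ d = (7 * k + 8) / 4) ∨
          (k % 4 = 1 ∧ d = (5 * k + 7) / 4) ∨
          (k % 4 = 2 ∧ d = (3 * k + 6) / 4) ∨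
          (k % 4 = 3 ∧ d = (k + 5) / 4)) :
    Nat.gcd d (2 * k + 1) = 1 := by
  obtain ⟨c, hc⟩ : ∃ c, 8 * d = c * (2 * k + 1) + 9 := by
    rcases hd with ⟨_, rfl⟩ | ⟨_, rfl⟩ | ⟨_, rfl⟩ | ⟨_, rfl⟩
    exacts [⟨7, by omega⟩, ⟨5, by omega⟩, ⟨3, by omega⟩, ⟨1, by omega⟩]
  -- so any common divisor of `d` and `2 * k + 1` divides `9`
  exact Nat.Coprime.of_mul_eq_mul_add hc (Nat.coprime_nine_of_not_three_dvd h3)
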